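/- arXiv:1110.6888 — 4 statements merged into one kernel-verified Lean document; each statement's English description precedes it below -/
import Mathlib

section
/- Let p be a prime, G a finite p-group, and A = Ω₁(Z(Φ(G))). Then for every x ∈ G and every a ∈ A, the product a·(x⁻¹ax)·(x⁻²ax²)⋯(x^{-(p-1)}ax^{p-1}) equals the iterated commutator [a, x, x, …, x] with p−1 copies of x (where [a,x] = a⁻¹x⁻¹ax and [a, x, x] = [[a,x],x], etc.; for p−1 = 1 this is just [a,x]). -/
/-
Conjugation by `x⁻¹` is a linear endomorphism `τ` of the elementary abelian normal subgroup `A`,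
viewed additively as an `𝔽_p`-vector space. The commutator `[b, x] = b⁻¹ (x⁻¹ b x)` becomes
`(τ - 1) b`, so `[a, x, …, x] = (τ - 1)^(p-1) a`, while the product of the conjugates of `a` is
`(1 + τ + ⋯ + τ^(p-1)) a`. These agree because in `𝔽_p[X]`
`(X - 1)^(p-1) (X - 1) = X^p - 1 = (1 + X + ⋯ + X^(p-1)) (X - 1)`, and `X - 1` cancels.
-/

/-- The commutator `[a,b] = a⁻¹b⁻¹ab`. -/
def stmt13Comm {G : Type*} [Group G] (a b : G) : G := a⁻¹ * b⁻¹ * a * b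

/-- The left-normed iterated commutator `[a, x, x, …, x]` with `n` copies of `x`
(`n = 0` gives `a`). -/
def stmt13CommIter {G : Type*} [Group G] (a x : G) : ℕ → G
  | 0 => a
  | n + 1 => stmt13Comm (stmt13CommIter a x n) x

open Polynomial Finset

theorem Polynomial.X_sub_one_pow_pred_eq_geom_sum {K : Type*} [CommRing K] [IsDomain K]
    (p : ℕ) [Fact p.Prime] [CharP K p] :
    (X - 1 : K[X]) ^ (p - 1) = ∑ i ∈ range p, X ^ i := by
  have hX : (X - 1 : K[X]) ≠ 0 := by simpa using X_sub_C_ne_zero (1 : K)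
  refine mul_right_cancel₀ hX ?_
  rw [← pow_succ, Nat.sub_add_cancel (Fact.out : p.Prime).one_le, sub_pow_char, one_pow,
    geom_sum_mul]

theorem sub_one_pow_pred_eq_geom_sum (K : Type*) {R : Type*} [CommRing K] [IsDomain K]
    (p : ℕ) [Fact p.Prime] [CharP K p] [Ring R] [Algebra K R] (a : R) :
    (a - 1) ^ (p - 1) = ∑ i ∈ range p, a ^ i := by
  simpa using congrArg (aeval a) (X_sub_one_pow_pred_eq_geom_sum (K := K) p)

namespace Subgroup

variable {G : Type*} [Group G]

def omegaOne (Z : Subgroup G) [IsMulCommutative Z] (n : ℕ) : Subgroup G where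
  carrier := {y | y ∈ Z ∧ y ^ n = 1}
  mul_mem' := fun ⟨hy, hyn⟩ ⟨hz, hzn⟩ =>
    ⟨mul_mem hy hz, by rw [Commute.mul_pow (setLike_mul_comm hy hz), hyn, hzn, one_mul]⟩
  one_mem' := ⟨one_mem Z, one_pow n⟩
  inv_mem' := fun ⟨hy, hyn⟩ => ⟨inv_mem hy, by rw [inv_pow, hyn, inv_one]⟩

variable (Z : Subgroup G) [IsMulCommutative Z] (n : ℕ)

theorem pow_eq_one_of_mem_omegaOne {y : G} (hy : y ∈ Z.omegaOne n) : y ^ n = 1 := hy.2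

instance : IsMulCommutative (Z.omegaOne n) :=
  .of_setLike_mul_comm fun _ hy _ hz => setLike_mul_comm hy.1 hz.1

instance [Z.Normal] : (Z.omegaOne n).Normal where
  conj_mem y hy g :=
    ⟨Normal.conj_mem ‹_› y hy.1 g, by rw [conj_pow, hy.2, mul_one, mul_inv_cancel]⟩

end Subgroup

section ConjEnd

open scoped IsMulCommutative

variable {G : Type*} [Group G] (A : Subgroup G) [A.Normal] [IsMulCommutative A]
  (p : ℕ) [Module (ZMod p) (Additive A)]

def conjEnd (x : G) : Module.End (ZMod p) (Additive A) :=
  (MulAut.conjNormal x⁻¹).toMonoidHom.toAdditive.toZModLinearMap p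

variable {A p}

theorem coe_conjEnd_apply (x : G) (m : Additive A) :
    ((Additive.toMul (conjEnd A p x m) : A) : G) = x⁻¹ * (Additive.toMul m : A) * x := by
  simp [conjEnd]

theorem coe_conjEnd_pow_apply (x : G) (n : ℕ) (b : A) :
    ((Additive.toMul ((conjEnd A p x ^ n) (.ofMul b)) : A) : G) = (x ^ n)⁻¹ * b * x ^ n := by
  induction n with
  | zero => simp
  | succ n ih =>
    rw [pow_succ', Module.End.mul_apply, coe_conjEnd_apply, ih]
    group

theorem coe_conjEnd_sub_one_apply (x : G) (m : Additive A) :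
    ((Additive.toMul ((conjEnd A p x - 1) m) : A) : G) =
      stmt13Comm ((Additive.toMul m : A) : G) x := by
  rw [LinearMap.sub_apply, Module.End.one_apply, sub_eq_neg_add, toMul_add, toMul_neg,
    Subgroup.coe_mul, Subgroup.coe_inv, coe_conjEnd_apply, stmt13Comm]
  group

theorem coe_conjEnd_sub_one_pow_apply (x : G) (n : ℕ) (b : A) :
    ((Additive.toMul (((conjEnd A p x - 1) ^ n) (.ofMul b)) : A) : G) =
      stmt13CommIter (b : G) x n := by
  induction n with
  | zero => rfl
  | succ n ih =>
    rw [pow_succ', Module.End.mul_apply, coe_conjEnd_sub_one_apply, ih, stmt13CommIter]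

theorem coe_sum_conjEnd_pow_apply (x : G) (n : ℕ) (b : A) :
    ((Additive.toMul ((∑ i ∈ range n, conjEnd A p x ^ i) (.ofMul b)) : A) : G) =
      ((List.range n).map fun i => (x ^ i)⁻¹ * b * x ^ i).prod := by
  induction n with
  | zero => simp
  | succ n ih =>
    rw [sum_range_succ, List.range_succ, List.map_append, List.prod_append, ← ih,
      LinearMap.add_apply, toMul_add, Subgroup.coe_mul, coe_conjEnd_pow_apply]
    simp

end ConjEnd

open scoped IsMulCommutative in
theorem list_prod_map_conj_pow_eq_stmt13CommIter {G : Type*} [Group G] {p : ℕ} [Fact p.Prime]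
    (A : Subgroup G) [A.Normal] [IsMulCommutative A] (hA : ∀ a ∈ A, a ^ p = 1) (x : G) {a : G}
    (ha : a ∈ A) :
    ((List.range p).map fun i => (x ^ i)⁻¹ * a * x ^ i).prod = stmt13CommIter a x (p - 1) := by
  -- `AddCommGroup.zmodModule` is a `match` on `p` that blocks instance search, so we only keep
  -- the existence of the module structure.
  obtain ⟨_⟩ : Nonempty (Module (ZMod p) (Additive A)) := ⟨AddCommGroup.zmodModule fun m =>
    Additive.toMul.injective <| Subtype.ext <| by simpa using hA _ (Additive.toMul m).2⟩
  rw [← coe_sum_conjEnd_pow_apply (p := p) x p ⟨a, ha⟩,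
    ← sub_one_pow_pred_eq_geom_sum (ZMod p) p (conjEnd A p x), coe_conjEnd_sub_one_pow_apply]

theorem stmt_13_general (p : ℕ) (hp : p.Prime) (G : Type*) [Group G] (x : G) (a : G)
    (ha : a ∈ Subgroup.closure
      {y : G | y ∈ (Subgroup.center (frattini G)).map (frattini G).subtype ∧ y ^ p = 1}) :
    ((List.range p).map fun i => (x ^ i)⁻¹ * a * x ^ i).prod = stmt13CommIter a x (p - 1) := by
  have : Fact p.Prime := ⟨hp⟩
  let Z := (Subgroup.center (frattini G)).map (frattini G).subtype
  change a ∈ Subgroup.closure (Z.omegaOne p : Set G) at ha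
  rw [Subgroup.closure_eq] at ha
  exact list_prod_map_conj_pow_eq_stmt13CommIter _ (fun _ => Z.pow_eq_one_of_mem_omegaOne p) x ha

/-- Lemma (prop)(2): for `A = Ω₁(Z(Φ(G)))` in a finite `p`-group `G`, the trace
`a·(x⁻¹ax)·(x⁻²ax²)⋯(x^{-(p-1)}ax^{p-1})` equals `[a, x, …, x]` with `p-1` copies of `x`. -/
theorem stmt_13 (p : ℕ) (hp : p.Prime) (G : Type*) [Group G] [Finite G]
    (hpG : IsPGroup p G) (x : G) (a : G)
    (ha : a ∈ Subgroup.closure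
      {y : G | y ∈ (Subgroup.center (frattini G)).map (frattini G).subtype ∧ y ^ p = 1}) :
    ((List.range p).map fun i => (x ^ i)⁻¹ * a * x ^ i).prod = stmt13CommIter a x (p - 1) :=
  stmt_13_general p hp G x a ha
end

section
/- Let p be a prime and let G be a finite nonabelian p-group with C_G(Z(Φ(G))) = Φ(G). Let A = Ω₁(Z(Φ(G))) and A* = Ω₁*(G) ∩ Z(Φ(G)), where Ω₁*(G) = ⟨x ∈ G : x^p ∈ Z(G)⟩. Let δ : G → A be a map such that δ(g) = δ(h) whenever gΦ(G) = hΦ(G), and δ(gh) = (h⁻¹δ(g)h)·δ(h) for all g, h ∈ G. Then the map α : G → G defined by α(x) = x·δ(x) is an automorphism of G satisfying α^p = id and α(x) = x for all x ∈ Φ(G); moreover, α is inner (equal to conjugation by some element of G) if and only if there exists a ∈ A* with δ(x) = [x,a] = x⁻¹a⁻¹xa for all x ∈ G. -/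
/-!
Since `δ` takes values in `Φ(G)` and is constant on cosets of `Φ(G)`, one has
`δ(x δ(x)) = δ(x)`, so `x ↦ x δ(x)⁻¹` inverts `α`, and `αⁿ(x) = x δ(x)ⁿ`; the derivation rule
makes `α` multiplicative. If `α` is conjugation by `g`, then `g` centralizes `Φ(G)` because `α`
fixes it, hence `g ∈ C_G(Z(Φ(G))) = Φ(G)`, so `g ∈ Z(Φ(G))`; and `αᵖ = 1` puts `gᵖ` in `Z(G)`.
-/

open Subgroup

namespace Subgroup

variable {G : Type*} [Group G]

theorem map_subtype_center (H : Subgroup G) : (center H).map H.subtype = H ⊓ centralizer H := by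
  ext g
  simp only [mem_map, mem_center_iff, subtype_apply, mem_inf, mem_centralizer_iff, SetLike.mem_coe]
  constructor
  · rintro ⟨z, hz, rfl⟩
    exact ⟨z.2, fun h hh => congrArg Subtype.val (hz ⟨h, hh⟩)⟩
  · rintro ⟨hg, hcomm⟩
    exact ⟨⟨g, hg⟩, fun h => Subtype.ext (hcomm h h.2), rfl⟩

theorem inf_centralizer_le_centralizer_self (H : Subgroup G) :
    H ⊓ centralizer H ≤ centralizer (H ⊓ centralizer H : Subgroup G) :=
  inf_le_right.trans (centralizer_le inf_le_left)

theorem mem_and_pow_eq_one_of_mem_closure {M : Subgroup G} (hM : M ≤ centralizer M) {n : ℕ}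
    {y : G} (hy : y ∈ closure {y | y ∈ M ∧ y ^ n = 1}) : y ∈ M ∧ y ^ n = 1 := by
  induction hy using closure_induction with
  | mem y hy => exact hy
  | one => exact ⟨one_mem M, one_pow n⟩
  | mul a b _ _ ha hb =>
    have hab : Commute a b := mem_centralizer_iff.mp (hM hb.1) a ha.1
    exact ⟨mul_mem ha.1 hb.1, by rw [hab.mul_pow, ha.2, hb.2, one_mul]⟩
  | inv a _ ha => exact ⟨inv_mem ha.1, by rw [inv_pow, ha.2, inv_one]⟩

theorem mem_inf_centralizer_of_forall_conj_eq {N : Subgroup G}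
    (hcent : centralizer (N ⊓ centralizer N : Subgroup G) = N) {g : G}
    (hg : ∀ x ∈ N, g⁻¹ * x * g = x) : g ∈ N ⊓ centralizer N := by
  have hgc : g ∈ centralizer N := mem_centralizer_iff.mpr fun x hx => by
    simpa only [mul_assoc, inv_mul_eq_iff_eq_mul] using hg x hx
  exact ⟨hcent ▸ centralizer_le inf_le_left hgc, hgc⟩

end Subgroup

section Derivation

variable {G : Type*} [Group G] {N : Subgroup G} {δ : G → G}

theorem derivation_one (hder : ∀ g h, δ (g * h) = h⁻¹ * δ g * h * δ h) : δ 1 = 1 := by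
  simpa using hder 1 1

theorem derivation_mul_of_mem (hconst : ∀ g h, g⁻¹ * h ∈ N → δ g = δ h) (g : G) {n : G}
    (hn : n ∈ N) : δ (g * n) = δ g :=
  (hconst g (g * n) (by rwa [inv_mul_cancel_left])).symm

variable (hder : ∀ g h, δ (g * h) = h⁻¹ * δ g * h * δ h) (hmem : ∀ g, δ g ∈ N)
  (hconst : ∀ g h, g⁻¹ * h ∈ N → δ g = δ h)

def derivationAut : MulAut G where
  toFun x := x * δ x
  invFun x := x * (δ x)⁻¹
  left_inv x := by
    simp only [derivation_mul_of_mem hconst x (hmem x), mul_inv_cancel_right]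
  right_inv x := by
    simp only [derivation_mul_of_mem hconst x (inv_mem (hmem x)), inv_mul_cancel_right]
  map_mul' g h := by
    simp only [hder g h]
    group

theorem derivationAut_apply (x : G) : derivationAut hder hmem hconst x = x * δ x := rfl

theorem derivationAut_pow_apply (n : ℕ) (x : G) :
    (derivationAut hder hmem hconst ^ n) x = x * δ x ^ n := by
  induction n generalizing x with
  | zero => simp
  | succ n ih =>
    rw [pow_succ, MulAut.mul_apply, ih, derivationAut_apply,
      derivation_mul_of_mem hconst x (hmem x), pow_succ', mul_assoc]

theorem derivationAut_pow_eq_one {n : ℕ} (hn : ∀ g, δ g ^ n = 1) :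
    derivationAut hder hmem hconst ^ n = 1 :=
  MulEquiv.ext fun x => by rw [derivationAut_pow_apply, hn, mul_one, MulAut.one_apply]

theorem derivationAut_apply_of_mem {x : G} (hx : x ∈ N) :
    derivationAut hder hmem hconst x = x := by
  rw [derivationAut_apply, ← hconst 1 x (by rwa [inv_one, one_mul]), derivation_one hder, mul_one]

end Derivation

theorem pow_mem_center_of_forall_apply_eq_conj {G : Type*} [Group G] {α : MulAut G} {g : G}
    (hα : ∀ x, α x = g⁻¹ * x * g) {n : ℕ} (hn : α ^ n = 1) : g ^ n ∈ center G := by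
  have hconj : α = MulAut.conj g⁻¹ := MulEquiv.ext fun x => by simp [hα]
  rw [← inv_mem_iff, mem_center_iff]
  intro x
  have := DFunLike.congr_fun hn x
  rw [hconj, ← map_pow, MulAut.conj_apply, MulAut.one_apply, inv_pow] at this
  exact (mul_inv_eq_iff_eq_mul.mp this).symm

theorem stmt_15_general (p : ℕ) (G : Type*) [Group G]
    (hcent : Subgroup.centralizer
        (((Subgroup.center (frattini G)).map (frattini G).subtype) : Set G) = frattini G)
    (δ : G → G)
    (hδA : ∀ g : G, δ g ∈ Subgroup.closure
      {y : G | y ∈ (Subgroup.center (frattini G)).map (frattini G).subtype ∧ y ^ p = 1})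
    (hδΦ : ∀ g h : G, g⁻¹ * h ∈ frattini G → δ g = δ h)
    (hδder : ∀ g h : G, δ (g * h) = h⁻¹ * δ g * h * δ h) :
    ∃ α : MulAut G, (∀ x : G, α x = x * δ x) ∧ α ^ p = 1 ∧
      (∀ x ∈ frattini G, α x = x) ∧
      ((∃ g : G, ∀ x : G, α x = g⁻¹ * x * g) ↔
        ∃ a ∈ Subgroup.closure {x : G | x ^ p ∈ Subgroup.center G}
            ⊓ (Subgroup.center (frattini G)).map (frattini G).subtype,
          ∀ x : G, δ x = x⁻¹ * a⁻¹ * x * a) := by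
  simp only [map_subtype_center] at hcent hδA ⊢
  have hδ g := mem_and_pow_eq_one_of_mem_closure (inf_centralizer_le_centralizer_self _) (hδA g)
  set α := derivationAut hδder (fun g => (hδ g).1.1) hδΦ
  have hαp : α ^ p = 1 := derivationAut_pow_eq_one _ _ _ fun g => (hδ g).2
  have hαΦ : ∀ x ∈ frattini G, α x = x := fun x => derivationAut_apply_of_mem _ _ _
  refine ⟨α, fun _ => rfl, hαp, hαΦ, ⟨?_, ?_⟩⟩
  · rintro ⟨g, hg⟩
    have hgZ := mem_inf_centralizer_of_forall_conj_eq hcent fun x hx =>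
      (hg x).symm.trans (hαΦ x hx)
    refine ⟨g, ⟨subset_closure (pow_mem_center_of_forall_apply_eq_conj hg hαp), hgZ⟩, fun x => ?_⟩
    rw [mul_assoc x⁻¹, mul_assoc x⁻¹, ← hg x, derivationAut_apply, inv_mul_cancel_left]
  · rintro ⟨a, -, ha⟩
    exact ⟨a, fun x => by rw [derivationAut_apply, ha]; group⟩

/-- Lemma (theme): let `G` be a finite nonabelian `p`-group with `C_G(Z(Φ(G))) = Φ(G)`,
`A = Ω₁(Z(Φ(G)))` and `A* = Ω₁*(G) ∩ Z(Φ(G))`. If `δ : G → A` is constant on cosets of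
`Φ(G)` and satisfies `δ(gh) = (h⁻¹ δ(g) h)·δ(h)`, then `x ↦ x·δ(x)` is an automorphism of
order dividing `p` fixing `Φ(G)` elementwise, and it is inner iff `δ = [·, a]` for some
`a ∈ A*`. -/
theorem stmt_15 (p : ℕ) (hp : p.Prime) (G : Type*) [Group G] [Finite G]
    (hpG : IsPGroup p G) (hna : ¬ ∀ a b : G, a * b = b * a)
    (hcent : Subgroup.centralizer
        (((Subgroup.center (frattini G)).map (frattini G).subtype) : Set G) = frattini G)
    (δ : G → G)
    (hδA : ∀ g : G, δ g ∈ Subgroup.closure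
      {y : G | y ∈ (Subgroup.center (frattini G)).map (frattini G).subtype ∧ y ^ p = 1})
    (hδΦ : ∀ g h : G, g⁻¹ * h ∈ frattini G → δ g = δ h)
    (hδder : ∀ g h : G, δ (g * h) = h⁻¹ * δ g * h * δ h) :
    ∃ α : MulAut G, (∀ x : G, α x = x * δ x) ∧ α ^ p = 1 ∧
      (∀ x ∈ frattini G, α x = x) ∧
      ((∃ g : G, ∀ x : G, α x = g⁻¹ * x * g) ↔
        ∃ a ∈ Subgroup.closure {x : G | x ^ p ∈ Subgroup.center G}
            ⊓ (Subgroup.center (frattini G)).map (frattini G).subtype,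
          ∀ x : G, δ x = x⁻¹ * a⁻¹ * x * a) :=
  stmt_15_general p G hcent δ hδA hδΦ hδder
end

section
/- Let G be a finite abelian group that is the internal direct product of cyclic subgroups ⟨x₁⟩, …, ⟨x_n⟩, and let A be an abelian group on which G acts by automorphisms (write a^g for the action). Given elements b₁, …, b_n ∈ A, there exists a derivation δ : G → A (a map with δ(gh) = (δ(g))^h·δ(h)) such that δ(x_i) = b_i for all i = 1, …, n if and only if both of the following hold: (a) b_i·b_i^{x_i}·b_i^{x_i²}⋯b_i^{x_i^{o(x_i)−1}} = 1 for each i, where o(x_i) is the order of x_i; and (b) b_i⁻¹·b_i^{x_j} = b_j⁻¹·b_j^{x_i} for all i, j. -/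
/-!
A map `δ : G → A` is a crossed homomorphism exactly when `g ↦ (δ g, g)` is a homomorphism
`G →* A ⋊ G`, and for abelian `G` the derivation identity `δ(gh) = δ(g)^h δ(h)` is the crossed
homomorphism identity. Since the `xᵢ` generate `G`, derivations with `δ(xᵢ) = bᵢ` thus correspond
to homomorphisms `G →* A ⋊ G` with `xᵢ ↦ (bᵢ, xᵢ)`. As `G` is the direct product of the cyclic
groups `⟨xᵢ⟩`, such a homomorphism exists iff `(bᵢ, xᵢ) ^ o(xᵢ) = 1` and the `(bᵢ, xᵢ)` commute
pairwise. In `A ⋊ G` we have `(b, x) ^ m = (b · b^x ⋯ b^{x^{m-1}}, x ^ m)`, and `(bᵢ, xᵢ)`,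
`(bⱼ, xⱼ)` commute iff `[bᵢ, xⱼ] = [bⱼ, xᵢ]`.
-/

open Finset Subgroup

theorem Subgroup.closure_range_eq_iSup_zpowers {G ι : Type*} [Group G] (x : ι → G) :
    closure (Set.range x) = ⨆ i, zpowers (x i) := by
  simp only [← Set.iUnion_singleton_eq_range, closure_iUnion, zpowers_eq_closure]

theorem Subgroup.mem_zpowers_mk_self {G : Type*} [Group G] (g : G) (u : zpowers g) :
    u ∈ zpowers ⟨g, mem_zpowers g⟩ := by
  obtain ⟨_, m, rfl⟩ := u
  exact ⟨m, rfl⟩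

theorem exists_monoidHom_apply_eq_iff_of_iSupIndep {G K ι : Type*} [CommGroup G] [Group K]
    [Fintype ι] {x : ι → G} (hind : iSupIndep fun i => zpowers (x i))
    (hgen : ⨆ i, zpowers (x i) = ⊤) (k : ι → K) :
    (∃ F : G →* K, ∀ i, F (x i) = k i) ↔
      (∀ i, k i ^ orderOf (x i) = 1) ∧ ∀ i j, Commute (k i) (k j) := by
  classical
  constructor
  · rintro ⟨F, hF⟩
    refine ⟨fun i => ?_, fun i j => ?_⟩
    · rw [← hF, ← map_pow, pow_orderOf_eq_one, map_one]
    · simpa only [hF] using (Commute.all (x i) (x j)).map F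
  rintro ⟨hord, hcomm⟩
  let f i : zpowers (x i) →* K := monoidHomOfForallMemZpowers (mem_zpowers_mk_self (x i))
    (g' := k i) (by rw [orderOf_mk]; exact orderOf_dvd_of_pow_eq_one (hord i))
  have hf i : f i ⟨x i, mem_zpowers _⟩ = k i := monoidHomOfForallMemZpowers_apply_gen ..
  have hfcomm : Pairwise fun i j => ∀ u v, Commute (f i u) (f j v) := by
    intro i j _ u v
    obtain ⟨m, rfl⟩ := mem_zpowers_iff.mp (mem_zpowers_mk_self (x i) u)
    obtain ⟨l, rfl⟩ := mem_zpowers_iff.mp (mem_zpowers_mk_self (x j) v)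
    simpa only [map_zpow, hf] using (hcomm i j).zpow_zpow m l
  have hGcomm : Pairwise fun i j => ∀ u v : G, u ∈ zpowers (x i) → v ∈ zpowers (x j) →
      Commute u v := fun _ _ _ u v _ _ => Commute.all u v
  let e : (∀ i, zpowers (x i)) ≃* G := MulEquiv.ofBijective (noncommPiCoprod hGcomm)
    ⟨injective_noncommPiCoprod_of_iSupIndep hind,
      MonoidHom.range_eq_top.mp (noncommPiCoprod_range.trans hgen)⟩
  refine ⟨(MonoidHom.noncommPiCoprod f hfcomm).comp e.symm.toMonoidHom, fun i => ?_⟩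
  have he : e.symm (x i) = Pi.mulSingle i ⟨x i, mem_zpowers _⟩ :=
    e.symm_apply_eq.mpr (noncommPiCoprod_mulSingle (hcomm := hGcomm) i ⟨x i, mem_zpowers _⟩).symm
  simp [he, hf]

namespace SemidirectProduct

variable {N G : Type*} [CommGroup N] [Group G] {φ : G →* MulAut N}

theorem mk_pow (a : N) (g : G) (m : ℕ) :
    (⟨a, g⟩ : N ⋊[φ] G) ^ m = ⟨∏ j ∈ range m, φ (g ^ j) a, g ^ m⟩ := by
  induction m with
  | zero => ext <;> simp
  | succ m ih =>
    rw [pow_succ, ih, mul_def]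
    ext
    · simp only [prod_range_succ, map_pow]
    · simp only [pow_succ]

theorem mk_commute_mk_iff {a b : N} {g h : G} (hgh : Commute g h) :
    Commute (⟨a, g⟩ : N ⋊[φ] G) ⟨b, h⟩ ↔ a⁻¹ * φ h a = b⁻¹ * φ g b := by
  rw [Commute, SemiconjBy, SemidirectProduct.ext_iff]
  simp only [mul_left, mul_right, hgh.eq, and_true]
  rw [inv_mul_eq_div, inv_mul_eq_div, div_eq_div_iff_mul_eq_mul, mul_comm (φ h a),
    mul_comm (φ g b), eq_comm]

end SemidirectProduct

section CrossedHom

variable {G A : Type*} [Group G] [Group A] [MulDistribMulAction G A]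

def IsCrossedHom (δ : G → A) : Prop := ∀ g h, δ (g * h) = δ g * g • δ h

theorem exists_isCrossedHom_iff_exists_monoidHom {ι : Type*} {x : ι → G}
    (hgen : closure (Set.range x) = ⊤) (b : ι → A) :
    (∃ δ : G → A, IsCrossedHom δ ∧ ∀ i, δ (x i) = b i) ↔
      ∃ F : G →* A ⋊[MulDistribMulAction.toMulAut G A] G, ∀ i, F (x i) = ⟨b i, x i⟩ := by
  constructor
  · rintro ⟨δ, hδ, hb⟩
    have h1 : δ 1 = 1 := by simpa using hδ 1 1
    refine ⟨{ toFun g := ⟨δ g, g⟩, map_one' := ?_, map_mul' g h := ?_ }, fun i => ?_⟩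
    · ext <;> simp [h1]
    · ext <;> simp [hδ g h]
    · simp [hb]
  · rintro ⟨F, hF⟩
    have hsec : SemidirectProduct.rightHom.comp F = MonoidHom.id G :=
      MonoidHom.eq_of_eqOn_dense hgen (by rintro _ ⟨i, rfl⟩; simp [hF])
    have hright g : (F g).right = g := DFunLike.congr_fun hsec g
    refine ⟨fun g => (F g).left, fun g h => ?_, fun i => by simp [hF]⟩
    simp [hright]

end CrossedHom

theorem isCrossedHom_iff_of_comm {G A : Type*} [CommGroup G] [CommGroup A]
    [MulDistribMulAction G A] {δ : G → A} :
    IsCrossedHom δ ↔ ∀ g h, δ (g * h) = h • δ g * δ h :=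
  forall_comm.trans <| forall₂_congr fun h g => by rw [mul_comm h g, mul_comm (δ g)]

theorem stmt_17_general (G A : Type*) [CommGroup G] [CommGroup A]
    [MulDistribMulAction G A]
    (n : ℕ) (x : Fin n → G)
    (hind : iSupIndep fun i => Subgroup.zpowers (x i))
    (hgen : (⨆ i, Subgroup.zpowers (x i)) = ⊤)
    (b : Fin n → A) :
    (∃ δ : G → A, (∀ g h : G, δ (g * h) = h • δ g * δ h) ∧ ∀ i, δ (x i) = b i) ↔
      ((∀ i, (∏ j ∈ Finset.range (orderOf (x i)), (x i ^ j) • b i) = 1) ∧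
        ∀ i j, (b i)⁻¹ * (x j) • b i = (b j)⁻¹ * (x i) • b j) := by
  simp only [← isCrossedHom_iff_of_comm]
  rw [exists_isCrossedHom_iff_exists_monoidHom ((closure_range_eq_iSup_zpowers x).trans hgen),
    exists_monoidHom_apply_eq_iff_of_iSupIndep hind hgen]
  simp only [SemidirectProduct.mk_pow, SemidirectProduct.mk_commute_mk_iff, Commute.all,
    SemidirectProduct.ext_iff, SemidirectProduct.one_left, SemidirectProduct.one_right,
    pow_orderOf_eq_one, and_true, MulDistribMulAction.toMulAut_apply,
    MulDistribMulAction.toMulEquiv_apply]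

/-- Lemma (der): let `G` be a finite abelian group that is the internal direct product of
cyclic subgroups `⟨x₁⟩, …, ⟨xₙ⟩` acting on an abelian group `A`. Given `b₁, …, bₙ ∈ A`,
there is a derivation `δ : G → A` with `δ(xᵢ) = bᵢ` for all `i` iff `τ_{xᵢ}(bᵢ) = 1` for
all `i` and `[bᵢ, xⱼ] = [bⱼ, xᵢ]` for all `i, j`. -/
theorem stmt_17 (G A : Type*) [CommGroup G] [Finite G] [CommGroup A]
    [MulDistribMulAction G A]
    (n : ℕ) (x : Fin n → G)
    (hind : iSupIndep fun i => Subgroup.zpowers (x i))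
    (hgen : (⨆ i, Subgroup.zpowers (x i)) = ⊤)
    (b : Fin n → A) :
    (∃ δ : G → A, (∀ g h : G, δ (g * h) = h • δ g * δ h) ∧ ∀ i, δ (x i) = b i) ↔
      ((∀ i, (∏ j ∈ Finset.range (orderOf (x i)), (x i ^ j) • b i) = 1) ∧
        ∀ i j, (b i)⁻¹ * (x j) • b i = (b j)⁻¹ * (x i) • b j) :=
  stmt_17_general G A n x hind hgen b
end

section
/- Let G be a finite 3-group of nilpotency class at most 3. Then for all x, y, z ∈ G: [x,y,z]·[y,z,x]·[z,x,y] = 1, where [a,b] = a⁻¹b⁻¹ab and [a,b,c] = [[a,b],c]. -/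
/-- The commutator `[a,b] = a⁻¹b⁻¹ab`. -/
def stmt19Comm {G : Type*} [Group G] (a b : G) : G := a⁻¹ * b⁻¹ * a * b

/-!
In class at most 3 every triple commutator `[u,c]` with `u = [a,b]` is central, so
`c ↦ [u,c]` is a homomorphism to the centre, invariant under conjugation, and
`[u⁻¹,c] = [u,c]⁻¹`. Together these give `[x,y⁻¹,z] = [x,y,z]⁻¹`. The Hall–Witt identity
`[x,y⁻¹,z]^y [y,z⁻¹,x]^z [z,x⁻¹,y]^x = 1` then has central factors, so the conjugations drop
out and it becomes `[x,y,z]⁻¹ [y,z,x]⁻¹ [z,x,y]⁻¹ = 1`.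
-/

open scoped commutatorElement

namespace Stmt19Comm

variable {G : Type*} [Group G]

theorem eq_commutatorElement (a b : G) : stmt19Comm a b = ⁅a⁻¹, b⁻¹⁆ := by
  simp only [stmt19Comm, commutatorElement_def, inv_inv]

theorem mem_upperCentralSeries_of_mem_succ {n : ℕ} {a : G}
    (ha : a ∈ Subgroup.upperCentralSeries G (n + 1)) (b : G) :
    stmt19Comm a b ∈ Subgroup.upperCentralSeries G n := by
  rw [eq_commutatorElement]
  exact Subgroup.mem_upperCentralSeries_succ_iff.mp (inv_mem ha) b⁻¹

theorem commutator_mem_center_of_upperCentralSeries_three_eq_top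
    (h : Subgroup.upperCentralSeries G 3 = ⊤) (a b c : G) :
    stmt19Comm (stmt19Comm a b) c ∈ Subgroup.center G := by
  rw [← Subgroup.upperCentralSeries_one]
  refine mem_upperCentralSeries_of_mem_succ (mem_upperCentralSeries_of_mem_succ ?_ b) c
  simp [h]

theorem mul_right (u c d : G) :
    stmt19Comm u (c * d) = stmt19Comm u d * (d⁻¹ * stmt19Comm u c * d) := by
  simp only [stmt19Comm]; group

theorem inv_left (u c : G) : stmt19Comm u⁻¹ c = u * (stmt19Comm u c)⁻¹ * u⁻¹ := by
  simp only [stmt19Comm]; group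

theorem inv_right (a b : G) : stmt19Comm a b⁻¹ = b * (stmt19Comm a b)⁻¹ * b⁻¹ := by
  simp only [stmt19Comm]; group

theorem conj_left (g v c : G) :
    stmt19Comm (g * v * g⁻¹) c = g * stmt19Comm v (g⁻¹ * c * g) * g⁻¹ := by
  simp only [stmt19Comm]; group

theorem hall_witt (x y z : G) :
    (y⁻¹ * stmt19Comm (stmt19Comm x y⁻¹) z * y) * (z⁻¹ * stmt19Comm (stmt19Comm y z⁻¹) x * z) *
      (x⁻¹ * stmt19Comm (stmt19Comm z x⁻¹) y * x) = 1 := by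
  simp only [stmt19Comm]; group

theorem conj_eq_of_mem_center {t : G} (ht : t ∈ Subgroup.center G) (g : G) :
    g * t * g⁻¹ = t := by
  rw [Subgroup.mem_center_iff.mp ht g, mul_inv_cancel_right]

theorem inv_conj_eq_of_mem_center {t : G} (ht : t ∈ Subgroup.center G) (g : G) :
    g⁻¹ * t * g = t := by
  simpa using conj_eq_of_mem_center ht g⁻¹

section CentralTripleCommutators

variable (hc : ∀ a b c : G, stmt19Comm (stmt19Comm a b) c ∈ Subgroup.center G)
include hc

theorem commutator_mul_right (a b c d : G) :
    stmt19Comm (stmt19Comm a b) (c * d) =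
      stmt19Comm (stmt19Comm a b) c * stmt19Comm (stmt19Comm a b) d := by
  rw [mul_right, inv_conj_eq_of_mem_center (hc a b c)]
  exact (Subgroup.mem_center_iff.mp (hc a b d) _).symm

theorem commutator_inv_right (a b c : G) :
    stmt19Comm (stmt19Comm a b) c⁻¹ = (stmt19Comm (stmt19Comm a b) c)⁻¹ := by
  rw [inv_right, conj_eq_of_mem_center (inv_mem (hc a b c))]

theorem commutator_inv_left (a b c : G) :
    stmt19Comm (stmt19Comm a b)⁻¹ c = (stmt19Comm (stmt19Comm a b) c)⁻¹ := by
  rw [inv_left, conj_eq_of_mem_center (inv_mem (hc a b c))]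

theorem commutator_conj_right (a b g c : G) :
    stmt19Comm (stmt19Comm a b) (g⁻¹ * c * g) = stmt19Comm (stmt19Comm a b) c := by
  rw [commutator_mul_right hc, commutator_mul_right hc, commutator_inv_right hc,
    inv_conj_eq_of_mem_center (hc a b c)]

theorem commutator_inv_mid (x y z : G) :
    stmt19Comm (stmt19Comm x y⁻¹) z = (stmt19Comm (stmt19Comm x y) z)⁻¹ := by
  rw [inv_right, conj_left, commutator_inv_left hc, commutator_conj_right hc,
    conj_eq_of_mem_center (inv_mem (hc x y z))]

theorem jacobi (x y z : G) :
    stmt19Comm (stmt19Comm x y) z * stmt19Comm (stmt19Comm y z) x *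
      stmt19Comm (stmt19Comm z x) y = 1 := by
  have hw := hall_witt x y z
  simp only [commutator_inv_mid hc, inv_conj_eq_of_mem_center (inv_mem (hc _ _ _))] at hw
  have h12 : Commute (stmt19Comm (stmt19Comm x y) z) (stmt19Comm (stmt19Comm y z) x) :=
    (Subgroup.mem_center_iff.mp (hc x y z) _).symm
  rw [mul_eq_one_iff_eq_inv, inv_inv] at hw
  rw [mul_eq_one_iff_eq_inv, ← hw, mul_inv_rev, inv_inv, inv_inv, h12.eq]

end CentralTripleCommutators

end Stmt19Comm

theorem stmt_19_general (G : Type*) [Group G]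
    (hclass : upperCentralSeries G 3 = ⊤) (x y z : G) :
    stmt19Comm (stmt19Comm x y) z * stmt19Comm (stmt19Comm y z) x *
      stmt19Comm (stmt19Comm z x) y = 1 :=
  Stmt19Comm.jacobi
    (Stmt19Comm.commutator_mem_center_of_upperCentralSeries_three_eq_top hclass) x y z

/-- Lemma (equ)(5): in a finite 3-group of nilpotency class at most 3,
`[x,y,z]·[y,z,x]·[z,x,y] = 1`. -/
theorem stmt_19 (G : Type*) [Group G] [Finite G] (hpG : IsPGroup 3 G)
    (hclass : upperCentralSeries G 3 = ⊤) (x y z : G) :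
    stmt19Comm (stmt19Comm x y) z * stmt19Comm (stmt19Comm y z) x *
      stmt19Comm (stmt19Comm z x) y = 1 :=
  stmt_19_general G hclass x y z
end
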